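/- arXiv:2304.03260 — 2 statements merged into one kernel-verified Lean document; each statement's English description precedes it below -/
import Mathlib

section
/- Let 𝒜 be an abelian category and 𝒞 a collection of objects of 𝒜. Then Filt(Fac 𝒞) is the smallest torsion class of 𝒜 containing 𝒞: it is a torsion class containing 𝒞, and it is contained in every torsion class of 𝒜 that contains 𝒞. -/
universe v u

open CategoryTheory CategoryTheory.Limits

section Defs

variable (A : Type u) [Category.{v} A] [Abelian A]

/-- A class of objects is closed under isomorphisms. -/
def IsoClosed (C : Set A) : Prop := ∀ X Y : A, (X ≅ Y) → X ∈ C → Y ∈ C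

/-- A class of objects contains the zero object(s). -/
def ContainsZero (C : Set A) : Prop := ∀ X : A, IsZero X → X ∈ C

/-- A class of objects is closed under quotients: for every epimorphism `C ↠ X`
with `C` in the class, `X` is in the class. -/
def QuotientsClosed (C : Set A) : Prop :=
  ∀ (X Y : A) (f : X ⟶ Y), Epi f → X ∈ C → Y ∈ C

/-- A class of objects is closed under subobjects: for every monomorphism `X ↪ C`
with `C` in the class, `X` is in the class. -/
def SubobjectsClosed (C : Set A) : Prop :=
  ∀ (X Y : A) (f : X ⟶ Y), Mono f → Y ∈ C → X ∈ C

/-- A class of objects is closed under images: for every morphism `f : C₁ ⟶ C₂` with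
`C₁, C₂` in the class, the image of `f` is in the class. -/
def ImagesClosed (C : Set A) : Prop :=
  ∀ (X Y : A) (f : X ⟶ Y), X ∈ C → Y ∈ C → image f ∈ C

/-- A class of objects is closed under extensions: for every short exact sequence
`0 → L → M → N → 0` with `L, N` in the class, `M` is in the class. -/
def ExtClosed (C : Set A) : Prop :=
  ∀ S : ShortComplex A, S.ShortExact → S.X₁ ∈ C → S.X₃ ∈ C → S.X₂ ∈ C

/-- A torsion class: a subcategory closed under quotients and extensions. -/
def IsTorsionClass (C : Set A) : Prop :=
  IsoClosed A C ∧ ContainsZero A C ∧ QuotientsClosed A C ∧ ExtClosed A C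

/-- A torsion-free class: a subcategory closed under subobjects and extensions. -/
def IsTorsionFreeClass (C : Set A) : Prop :=
  IsoClosed A C ∧ ContainsZero A C ∧ SubobjectsClosed A C ∧ ExtClosed A C

/-- `Fac C`: the class of objects admitting an epimorphism from an object of `C`. -/
def Fac (C : Set A) : Set A := {X | ∃ (C₀ : A) (f : C₀ ⟶ X), C₀ ∈ C ∧ Epi f}

/-- `Sub C`: the class of objects admitting a monomorphism into an object of `C`. -/
def Subs (C : Set A) : Set A := {X | ∃ (C₀ : A) (f : X ⟶ C₀), C₀ ∈ C ∧ Mono f}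

/-- `Filt D`: the class of objects admitting a finite filtration
`0 = X₀ ≤ X₁ ≤ ⋯ ≤ Xₙ = X` whose subquotients `Xᵢ/Xᵢ₋₁` all belong to `D`.
Equivalently (inductively): `X` is zero, or `X` is an extension of an object of `D`
by an object of `Filt D`. -/
inductive Filt (D : Set A) : A → Prop
  | zero (X : A) : IsZero X → Filt D X
  | ext (S : ShortComplex A) : S.ShortExact → Filt D S.X₁ → S.X₃ ∈ D → Filt D S.X₂

end Defs

/-!
STATEMENT 4: For an abelian category `𝒜` and a collection `𝒞` of objects of `𝒜`,
`Filt (Fac 𝒞)` is the smallest torsion class of `𝒜` containing `𝒞`.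
-/

section Aux

variable {A : Type u} [Category.{v} A] [Abelian A] {D : Set A}

/-- For a mono `f`, `0 → X → Y → coker f → 0` is short exact. -/
lemma aux_shortExact_of_mono {X Y : A} (f : X ⟶ Y) [Mono f] :
    (ShortComplex.mk f (cokernel.π f) (cokernel.condition f)).ShortExact := by
  apply ShortComplex.ShortExact.mk'
  · exact ShortComplex.exact_of_f_is_kernel _
      (Abelian.monoIsKernelOfCokernel (CokernelCofork.ofπ (cokernel.π f)
        (cokernel.condition f)) (cokernelIsCokernel f))
  · exact inferInstanceAs (Mono f)
  · exact inferInstanceAs (Epi (cokernel.π f))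

/-- For an epi `f`, `0 → ker f → X → Y → 0` is short exact. -/
lemma aux_shortExact_of_epi {X Y : A} (f : X ⟶ Y) [Epi f] :
    (ShortComplex.mk (kernel.ι f) f (kernel.condition f)).ShortExact := by
  apply ShortComplex.ShortExact.mk'
  · exact ShortComplex.exact_of_g_is_cokernel _
      (Abelian.epiIsCokernelOfKernel (KernelFork.ofι (kernel.ι f)
        (kernel.condition f)) (kernelIsKernel f))
  · exact inferInstanceAs (Mono (kernel.ι f))
  · exact inferInstanceAs (Epi f)

/-- `Filt D` is closed under isomorphisms. -/
lemma aux_filt_iso {X Y : A} (e : X ≅ Y) (hX : Filt A D X) : Filt A D Y := by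
  induction hX generalizing Y with
  | zero X hX => exact Filt.zero Y (hX.of_iso e.symm)
  | ext S hS h1 h3 _ih =>
    have w : (S.f ≫ e.hom) ≫ (e.inv ≫ S.g) = 0 := by
      rw [Category.assoc, Iso.hom_inv_id_assoc, S.zero]
    refine Filt.ext (ShortComplex.mk (S.f ≫ e.hom) (e.inv ≫ S.g) w) ?_ h1 h3
    have eiso : S ≅ ShortComplex.mk (S.f ≫ e.hom) (e.inv ≫ S.g) w :=
      ShortComplex.isoMk (Iso.refl _) e (Iso.refl _) (by simp) (by simp)
    exact ShortComplex.shortExact_of_iso eiso hS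

lemma aux_mem_filt_of_mem (X : A) (hX : X ∈ D) : Filt A D X := by
  have : Epi (𝟙 X) := inferInstance
  refine Filt.ext (ShortComplex.mk (kernel.ι (𝟙 X)) (𝟙 X) (kernel.condition _))
    (aux_shortExact_of_epi (𝟙 X)) (Filt.zero _ ?_) hX
  refine IsZero.of_mono_eq_zero (kernel.ι (𝟙 X)) ?_
  simpa using kernel.condition (𝟙 X)

omit [Abelian A] in
/-- `Fac C` is closed under quotients. -/
lemma aux_fac_quotClosed (C : Set A) : QuotientsClosed A (Fac A C) := by
  rintro X Y f hf ⟨C₀, g, hC₀, hg⟩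
  exact ⟨C₀, g ≫ f, hC₀, epi_comp g f⟩

/-- If `D` is closed under quotients, so is `Filt D`. -/
lemma aux_filt_quotClosed (hD : QuotientsClosed A D) :
    QuotientsClosed A {X | Filt A D X} := by
  intro X Y f hf hX
  simp only [Set.mem_setOf_eq] at hX ⊢
  induction hX generalizing Y with
  | zero X hX =>
    refine Filt.zero Y ?_
    rw [IsZero.iff_id_eq_zero]
    have h0 : f = 0 := hX.eq_of_src f 0
    rw [← cancel_epi f, h0]; simp
  | ext S hS h1 h3 ih =>
    -- quotient `f : S.X₂ ⟶ Y`; let `q = S.f ≫ f`, and use `image q ↪ Y ↠ coker`.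
    have hIm : Filt A D (image (S.f ≫ f)) := ih _ (factorThruImage (S.f ≫ f)) inferInstance
    have hπ0 : S.f ≫ (f ≫ cokernel.π (image.ι (S.f ≫ f))) = 0 := by
      have h2 : (factorThruImage (S.f ≫ f) ≫ image.ι (S.f ≫ f)) ≫
          cokernel.π (image.ι (S.f ≫ f)) = 0 := by
        rw [Category.assoc, cokernel.condition, comp_zero]
      rw [image.fac] at h2
      rw [← Category.assoc]
      exact h2
    obtain ⟨r, hr⟩ := CokernelCofork.IsColimit.desc' hS.gIsCokernel
      (f ≫ cokernel.π (image.ι (S.f ≫ f))) hπ0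
    have hrepi : Epi r := by
      have : Epi (f ≫ cokernel.π (image.ι (S.f ≫ f))) := epi_comp _ _
      exact epi_of_epi_fac hr
    have hcok : cokernel (image.ι (S.f ≫ f)) ∈ D := hD _ _ r hrepi h3
    exact Filt.ext (ShortComplex.mk (image.ι (S.f ≫ f)) (cokernel.π (image.ι (S.f ≫ f)))
      (cokernel.condition _)) (aux_shortExact_of_mono _) hIm hcok

/-- If `g : M ⟶ N` is an epi with `N ∈ Filt D` and `kernel g ∈ Filt D`, then `M ∈ Filt D`. -/
lemma aux_filt_extClosed_aux {N : A} (hN : Filt A D N) :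
    ∀ (M : A) (g : M ⟶ N), Epi g → Filt A D (kernel g) → Filt A D M := by
  induction hN with
  | zero N hN =>
    intro M g hg hker
    have : Epi g := hg
    have hSE := aux_shortExact_of_epi g
    have hg0 : g = 0 := hN.eq_of_tgt g 0
    have : Epi (kernel.ι g) := hSE.exact.epi_f hg0
    have : IsIso (kernel.ι g) := isIso_of_mono_of_epi _
    exact aux_filt_iso (asIso (kernel.ι g)) hker
  | ext T hT hT1 hT3 ih =>
    intro M g hg hker
    have : Epi g := hg
    have hTf : Mono T.f := hT.mono_f
    have hTg : Epi T.g := hT.epi_g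
    have hφepi : Epi (g ≫ T.g) := epi_comp _ _
    -- the pullback `P` of `g` and `T.f`
    have hsndepi : Epi (pullback.snd g T.f) := Abelian.epi_pullback_of_epi_f _ _
    -- `u : kernel g ⟶ P` is a kernel of `pullback.snd g T.f`
    have hu0 : kernel.ι g ≫ g = (0 : kernel g ⟶ T.X₁) ≫ T.f := by
      rw [kernel.condition, zero_comp]
    have hufst : pullback.lift (kernel.ι g) 0 hu0 ≫ pullback.fst g T.f = kernel.ι g :=
      pullback.lift_fst _ _ _
    have husnd : pullback.lift (kernel.ι g) 0 hu0 ≫ pullback.snd g T.f = 0 :=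
      pullback.lift_snd _ _ _
    have humono : Mono (pullback.lift (kernel.ι g) 0 hu0) := mono_of_mono_fac hufst
    have huker : IsLimit (KernelFork.ofι (pullback.lift (kernel.ι g) 0 hu0) husnd) := by
      refine KernelFork.IsLimit.ofι' _ husnd (fun {W} k hk => ?_) (hi := humono)
      have hk2 : (k ≫ pullback.fst g T.f) ≫ g = 0 := by
        rw [Category.assoc, pullback.condition, ← Category.assoc, hk, zero_comp]
      obtain ⟨t, ht⟩ := KernelFork.IsLimit.lift' (kernelIsKernel g)
        (k ≫ pullback.fst g T.f) hk2
      refine ⟨t, ?_⟩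
      apply pullback.hom_ext
      · rw [Category.assoc, hufst]; exact ht
      · rw [Category.assoc, husnd, comp_zero, hk]
    -- hence `kernel (pullback.snd g T.f) ≅ kernel g`, so it is in `Filt D`
    have hkersnd : Filt A D (kernel (pullback.snd g T.f)) := by
      have i := IsLimit.conePointUniqueUpToIso huker (kernelIsKernel (pullback.snd g T.f))
      exact aux_filt_iso i hker
    -- by the inductive hypothesis, `P ∈ Filt D`
    have hPfilt : Filt A D (pullback g T.f) := ih _ _ hsndepi hkersnd
    -- `pullback.fst g T.f` is a kernel of `g ≫ T.g`
    have hfst0 : pullback.fst g T.f ≫ (g ≫ T.g) = 0 := by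
      rw [← Category.assoc, pullback.condition, Category.assoc, T.zero, comp_zero]
    have hfstmono : Mono (pullback.fst g T.f) := inferInstance
    have hfstker : IsLimit (KernelFork.ofι (pullback.fst g T.f) hfst0) := by
      refine KernelFork.IsLimit.ofι' _ hfst0 (fun {W} k hk => ?_) (hi := hfstmono)
      have hk2 : (k ≫ g) ≫ T.g = 0 := by rw [Category.assoc]; exact hk
      obtain ⟨t, ht⟩ := KernelFork.IsLimit.lift' hT.fIsKernel (k ≫ g) hk2
      refine ⟨pullback.lift k t ht.symm, pullback.lift_fst _ _ _⟩
    -- SES : 0 → P → M → T.X₃ → 0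
    have hSES : (ShortComplex.mk (pullback.fst g T.f) (g ≫ T.g) hfst0).ShortExact := by
      apply ShortComplex.ShortExact.mk' _ hfstmono hφepi
      exact ShortComplex.exact_of_f_is_kernel _ hfstker
    exact Filt.ext _ hSES hPfilt hT3

end Aux

theorem filt_fac_is_smallest_torsion_class
    (A : Type u) [Category.{v} A] [Abelian A] (C : Set A) :
    IsTorsionClass A {X | Filt A (Fac A C) X} ∧
    C ⊆ {X | Filt A (Fac A C) X} ∧
    ∀ T : Set A, IsTorsionClass A T → C ⊆ T → {X | Filt A (Fac A C) X} ⊆ T := by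
  refine ⟨⟨?_, ?_, ?_, ?_⟩, ?_, ?_⟩
  · -- iso closed
    intro X Y e hX
    exact aux_filt_iso e hX
  · -- contains zero
    intro X hX
    exact Filt.zero X hX
  · -- quotients closed
    exact aux_filt_quotClosed (aux_fac_quotClosed C)
  · -- ext closed
    intro S hS h1 h3
    have : Epi S.g := hS.epi_g
    have i := IsLimit.conePointUniqueUpToIso hS.fIsKernel (kernelIsKernel S.g)
    exact aux_filt_extClosed_aux h3 S.X₂ S.g hS.epi_g (aux_filt_iso i h1)
  · -- contains C
    intro X hX
    exact aux_mem_filt_of_mem X ⟨X, 𝟙 X, hX, inferInstance⟩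
  · -- minimality
    rintro T ⟨hiso, hzero, hquot, hext⟩ hCT X hX
    simp only [Set.mem_setOf_eq] at hX
    induction hX with
    | zero X hX => exact hzero X hX
    | ext S hS h1 h3 ih =>
      obtain ⟨C₀, f, hC₀, hf⟩ := h3
      exact hext S hS ih (hquot _ _ f hf (hCT hC₀))
end

section
/- Let 𝒜 be an abelian category and 𝒞 a collection of objects of 𝒜. Then Filt(Sub 𝒞) is the smallest torsion-free class of 𝒜 containing 𝒞: it is a torsion-free class containing 𝒞, and it is contained in every torsion-free class of 𝒜 that contains 𝒞. -/
universe v u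

open CategoryTheory CategoryTheory.Limits

section Aux

open ZeroObject
open CategoryTheory.Abelian.Pseudoelement

attribute [local instance] CategoryTheory.Abelian.Pseudoelement.objectToSort
  CategoryTheory.Abelian.Pseudoelement.homToFun

variable {A : Type u} [Category.{v} A] [Abelian A] {D : Set A}

lemma filt_iso : ∀ {X : A}, Filt A D X → ∀ {Y : A}, (X ≅ Y) → Filt A D Y := by
  intro X hX
  induction hX with
  | zero X h => exact fun e => Filt.zero _ (h.of_iso e.symm)
  | ext S hS h1 h3 _ =>
    intro Y e
    have hzero : (S.f ≫ e.hom) ≫ (e.inv ≫ S.g) = 0 := by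
      rw [Category.assoc, e.hom_inv_id_assoc, S.zero]
    refine Filt.ext (ShortComplex.mk (S.f ≫ e.hom) (e.inv ≫ S.g) hzero)
      (ShortComplex.shortExact_of_iso
        (S₁ := S) (S₂ := ShortComplex.mk (S.f ≫ e.hom) (e.inv ≫ S.g) hzero)
        (ShortComplex.isoMk (Iso.refl _) e (Iso.refl _) (by simp) (by simp)) hS) h1 h3

lemma filt_of_mem {X : A} (hX : X ∈ D) : Filt A D X := by
  refine Filt.ext (ShortComplex.mk (0 : (0 : A) ⟶ X) (𝟙 X) (by simp)) ?_
    (Filt.zero _ (isZero_zero A)) hX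
  haveI : Mono (0 : (0 : A) ⟶ X) := ⟨fun {W} a b _ => (isZero_zero A).eq_of_tgt a b⟩
  exact { exact := (ShortComplex.exact_iff_mono _ rfl).2 inferInstance }

lemma filt_ext : ∀ {N : A}, Filt A D N → ∀ (S : ShortComplex A), S.ShortExact →
    Filt A D S.X₁ → (S.X₃ ≅ N) → Filt A D S.X₂ := by
  intro N hN
  induction hN with
  | zero N hz =>
    intro S hS h1 e
    have h3 : IsZero S.X₃ := hz.of_iso e
    haveI := hS.mono_f
    haveI : Epi S.f := hS.exact.epi_f (h3.eq_zero_of_tgt _)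
    haveI : IsIso S.f := isIso_of_mono_of_epi S.f
    exact filt_iso h1 (asIso S.f)
  | ext T hT hT1 hTmem ih =>
    intro S hS h1 e
    haveI := hS.epi_g; haveI := hT.epi_g; haveI := hT.mono_f; haveI := hS.mono_f
    set h : S.X₂ ⟶ T.X₃ := S.g ≫ e.hom ≫ T.g with hdef
    haveI : Epi h := epi_comp _ _
    set ι : kernel h ⟶ S.X₂ := kernel.ι h with ιdef
    -- the short exact sequence K → X₂ → T.X₃
    have S₂zero : ι ≫ h = 0 := kernel.condition h
    set S₂ : ShortComplex A := ShortComplex.mk ι h S₂zero with S₂def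
    have hS₂ : S₂.ShortExact :=
      { exact := S₂.exact_of_f_is_kernel (kernelIsKernel h) }
    -- the morphism f' : S.X₁ ⟶ K
    have hfh : S.f ≫ h = 0 := by rw [hdef, ← Category.assoc, S.zero, zero_comp]
    set f' : S.X₁ ⟶ kernel h := kernel.lift h S.f hfh with f'def
    have hf'ι : f' ≫ ι = S.f := kernel.lift_ι h S.f hfh
    -- the morphism g' : K ⟶ T.X₁
    have hcond : (ι ≫ S.g ≫ e.hom) ≫ T.g = 0 := by
      rw [Category.assoc, Category.assoc, ← hdef, kernel.condition]
    obtain ⟨g', hg'0⟩ := KernelFork.IsLimit.lift' hT.fIsKernel (ι ≫ S.g ≫ e.hom) hcond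
    have hg' : g' ≫ T.f = ι ≫ S.g ≫ e.hom := hg'0
    -- the short complex S₁ : S.X₁ → K → T.X₁
    have S₁zero : f' ≫ g' = 0 := by
      rw [← cancel_mono T.f, Category.assoc, hg', zero_comp, ← Category.assoc, hf'ι,
        ← Category.assoc, S.zero, zero_comp]
    set S₁ : ShortComplex A := ShortComplex.mk f' g' S₁zero with S₁def
    have hS₁ : S₁.ShortExact := by
      haveI : Mono f' := mono_of_mono_fac hf'ι
      haveI : Epi g' := by
        apply epi_of_pseudo_surjective
        intro c
        obtain ⟨m, hm⟩ := pseudo_surjective_of_epi (S.g ≫ e.hom) (pseudoApply T.f c)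
        have hm0 : pseudoApply h m = 0 := by
          rw [hdef, ← Category.assoc, Abelian.Pseudoelement.comp_apply, hm,
            ← Abelian.Pseudoelement.comp_apply, T.zero, Abelian.Pseudoelement.zero_apply]
        obtain ⟨k, hk⟩ := pseudo_exact_of_exact hS₂.exact m hm0
        have hk' : pseudoApply ι k = m := hk
        refine ⟨k, pseudo_injective_of_mono T.f ?_⟩
        show pseudoApply T.f (pseudoApply g' k) = pseudoApply T.f c
        rw [← Abelian.Pseudoelement.comp_apply, hg',
          Abelian.Pseudoelement.comp_apply, hk', hm]
      refine { exact := ?_ }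
      apply exact_of_pseudo_exact
      intro k hk
      have hk' : pseudoApply g' k = 0 := hk
      have hgk : pseudoApply (S.g ≫ e.hom) (pseudoApply ι k) = 0 := by
        rw [← Abelian.Pseudoelement.comp_apply, ← hg',
          Abelian.Pseudoelement.comp_apply, hk', apply_zero]
      have hgk2 : pseudoApply S.g (pseudoApply ι k) = 0 := by
        apply pseudo_injective_of_mono e.hom
        rw [← Abelian.Pseudoelement.comp_apply, hgk, apply_zero]
      obtain ⟨a, ha⟩ := pseudo_exact_of_exact hS.exact _ hgk2
      refine ⟨a, pseudo_injective_of_mono ι ?_⟩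
      show pseudoApply ι (pseudoApply f' a) = pseudoApply ι k
      rw [← Abelian.Pseudoelement.comp_apply, hf'ι, ha]
    have hK : Filt A D (kernel h) := ih S₁ hS₁ h1 (Iso.refl _)
    exact Filt.ext S₂ hS₂ hK hTmem

lemma filt_sub (hD : ∀ X Y : A, ∀ f : X ⟶ Y, Mono f → Y ∈ D → X ∈ D) :
    ∀ {M : A}, Filt A D M → ∀ (X : A) (f : X ⟶ M), Mono f → Filt A D X := by
  intro M hM
  induction hM with
  | zero M hz =>
    intro X f hf
    haveI := hf
    exact Filt.zero _ (IsZero.of_mono_eq_zero f (hz.eq_zero_of_tgt f))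
  | ext S hS h1 hmem ih =>
    intro X f hf
    haveI := hf; haveI := hS.mono_f; haveI := hS.epi_g
    set g : X ⟶ S.X₃ := f ≫ S.g with gdef
    set π : X ⟶ Abelian.image g := Abelian.factorThruImage g with πdef
    set μ : Abelian.image g ⟶ S.X₃ := Abelian.image.ι g with μdef
    have hπμ : π ≫ μ = g := Abelian.image.fac g
    have hmemI : Abelian.image g ∈ D := hD _ _ μ inferInstance hmem
    set ι : kernel g ⟶ X := kernel.ι g with ιdef
    have S'zero : ι ≫ π = 0 := by
      rw [← cancel_mono μ, Category.assoc, hπμ, kernel.condition, zero_comp]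
    set S' : ShortComplex A := ShortComplex.mk ι π S'zero with S'def
    have hS' : S'.ShortExact := by
      refine { exact := ?_ }
      apply exact_of_pseudo_exact
      intro b hb
      have hb' : pseudoApply π b = 0 := hb
      have hgb : pseudoApply g b = 0 := by
        rw [← hπμ, Abelian.Pseudoelement.comp_apply, hb', apply_zero]
      have hker : (ShortComplex.mk ι g (kernel.condition g)).Exact :=
        (ShortComplex.mk ι g (kernel.condition g)).exact_of_f_is_kernel (kernelIsKernel g)
      exact pseudo_exact_of_exact hker b hgb
    -- the mono from kernel g into S.X₁
    have hcond : (ι ≫ f) ≫ S.g = 0 := by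
      rw [Category.assoc, ← gdef, kernel.condition]
    obtain ⟨w, hw0⟩ := KernelFork.IsLimit.lift' hS.fIsKernel (ι ≫ f) hcond
    have hw : w ≫ S.f = ι ≫ f := hw0
    haveI : Mono (ι ≫ f) := mono_comp _ _
    haveI : Mono w := mono_of_mono_fac hw
    have hX' : Filt A D (kernel g) := ih _ w inferInstance
    exact Filt.ext S' hS' hX' hmemI

lemma filt_subset_of_torsionFree {F : Set A} (hF : IsTorsionFreeClass A F)
    (hDF : D ⊆ F) : ∀ {X : A}, Filt A D X → X ∈ F := by
  intro X hX
  induction hX with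
  | zero X h => exact hF.2.1 X h
  | ext S hS h1 h3 ih => exact hF.2.2.2 S hS ih (hDF h3)

end Aux

/-!
STATEMENT 5: For an abelian category `𝒜` and a collection `𝒞` of objects of `𝒜`,
`Filt (Sub 𝒞)` is the smallest torsion-free class of `𝒜` containing `𝒞`.
-/

theorem filt_sub_is_smallest_torsionFree_class
    (A : Type u) [Category.{v} A] [Abelian A] (C : Set A) :
    IsTorsionFreeClass A {X | Filt A (Subs A C) X} ∧
    C ⊆ {X | Filt A (Subs A C) X} ∧
    ∀ F : Set A, IsTorsionFreeClass A F → C ⊆ F → {X | Filt A (Subs A C) X} ⊆ F := by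
  have hsub : ∀ X Y : A, ∀ f : X ⟶ Y, Mono f → Y ∈ Subs A C → X ∈ Subs A C := by
    rintro X Y f hf ⟨C₀, g, hC₀, hg⟩
    haveI := hf; haveI := hg
    exact ⟨C₀, f ≫ g, hC₀, mono_comp f g⟩
  refine ⟨⟨?_, ?_, ?_, ?_⟩, ?_, ?_⟩
  · exact fun X Y e hX => filt_iso hX e
  · exact fun X h => Filt.zero X h
  · exact fun X Y f hf hY => filt_sub hsub hY X f hf
  · exact fun S hS h1 h3 => filt_ext h3 S hS h1 (Iso.refl _)
  · exact fun X hX => filt_of_mem ⟨X, 𝟙 X, hX, inferInstance⟩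
  · intro F hF hCF X hX
    refine filt_subset_of_torsionFree hF (fun Y hY => ?_) hX
    obtain ⟨C₀, g, hC₀, hg⟩ := hY
    exact hF.2.2.1 Y C₀ g hg (hCF hC₀)
end
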